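/- Let k ≥ 3 and let D be a unitrivalent diagram on k colors having a connected component C of degree k−1 (a tree with exactly one univalent vertex of each of the k colors), and suppose that the univalent vertices of C colored i and j are both adjacent to a common trivalent vertex of C. Then (1 + m(D;i,j))·[D] = 0 in B^{hl}(k), where [D] denotes the class of D in B^{hl}(k). -/

import Mathlib

/-!
Unitrivalent diagrams on `k` colors, in half-edge (combinatorial map) form.

A diagram is given by a finite set `H` of half-edges, a fixed-point-free
involution `sig` pairing the two half-edges of each edge, and a permutation
`tau` with `tau ^ 3 = id` whose orbits are the vertices: fixed points are
univalent vertices (carrying a color in `Fin k`) and 3-element orbits are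
trivalent vertices, the cyclic ordering of whose incident edges is given by
`tau`.  Every connected component is required to contain a univalent vertex.
-/
structure Diagram (k : ℕ) where
  H : Type
  fin : Fintype H
  dec : DecidableEq H
  sig : H → H
  sig_invol : ∀ h, sig (sig h) = h
  sig_ne : ∀ h, sig h ≠ h
  tau : H → H
  tau_cube : ∀ h, tau (tau (tau h)) = h
  color : H → Fin k
  conn : ∀ h, ∃ h', Relation.ReflTransGen (fun a b => b = sig a ∨ b = tau a) h h' ∧ tau h' = h'

attribute [instance] Diagram.fin Diagram.dec

namespace Diagram

variable {k : ℕ}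

/-- `a` and `b` are half-edges of the same connected component. -/
def Reach (D : Diagram k) (a b : D.H) : Prop :=
  Relation.ReflTransGen (fun x y => y = D.sig x ∨ y = D.tau x) a b

/-- The set of half-edges of the connected component of `h0`. -/
def compSet (D : Diagram k) (h0 : D.H) : Set D.H := {x | D.Reach h0 x}

/-- The set of univalent vertices (= `tau`-fixed half-edges) of the component of `h0`. -/
def univIn (D : Diagram k) (h0 : D.H) : Set D.H := {x | D.Reach h0 x ∧ D.tau x = x}

/-- The component of `h0` is a tree.  (Euler-count criterion: a connected component of a
graph all of whose vertices have degree 1 or 3 and with `u` univalent vertices is a tree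
iff it has exactly `4 * u - 6` half-edges.) -/
def IsTreeAt (D : Diagram k) (h0 : D.H) : Prop :=
  (D.compSet h0).ncard + 6 = 4 * (D.univIn h0).ncard

/-- The component of `h0` is boring: it has two univalent vertices of the same color,
or it contains a cycle (i.e. is not a tree). -/
def IsBoringAt (D : Diagram k) (h0 : D.H) : Prop :=
  (∃ x ∈ D.univIn h0, ∃ y ∈ D.univIn h0, x ≠ y ∧ D.color x = D.color y) ∨ ¬ D.IsTreeAt h0

def HasBoring (D : Diagram k) : Prop := ∃ h0, D.IsBoringAt h0

/-- `m D i j` (for `i ≠ j`) is the number of connected components of `D` consisting of a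
single edge with one endpoint colored `i` and the other colored `j`; each such component
is counted via its `i`-colored end. -/
noncomputable def m (D : Diagram k) (i j : Fin k) : ℕ :=
  {x : D.H | D.tau x = x ∧ D.tau (D.sig x) = D.sig x ∧ D.color x = i ∧
    D.color (D.sig x) = j}.ncard

/-- Number of vertices of the component of `h0`. -/
noncomputable def vertAt (D : Diagram k) (h0 : D.H) : ℕ :=
  (D.univIn h0).ncard + ((D.compSet h0).ncard - (D.univIn h0).ncard) / 3

/-- Degree (half the number of vertices) of the component of `h0`. -/
noncomputable def degAt (D : Diagram k) (h0 : D.H) : ℕ := D.vertAt h0 / 2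

/-- Total number of vertices of the diagram. -/
noncomputable def numVert (D : Diagram k) : ℕ :=
  Nat.card {h : D.H // D.tau h = h} +
    (Nat.card D.H - Nat.card {h : D.H // D.tau h = h}) / 3

/-- Degree of the diagram: half its total number of vertices. -/
noncomputable def deg (D : Diagram k) : ℕ := D.numVert / 2

/-- Isomorphism of unitrivalent diagrams: a bijection of half-edges commuting with the
edge involution and the vertex rotation, and preserving the colors of univalent vertices. -/
def Iso (D E : Diagram k) : Prop :=
  ∃ e : D.H ≃ E.H,
    (∀ h, e (D.sig h) = E.sig (e h)) ∧
    (∀ h, e (D.tau h) = E.tau (e h)) ∧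
    (∀ h, D.tau h = h → E.color (e h) = D.color h)

end Diagram

/-- The free real vector space on (the type of) unitrivalent diagrams.  Together with the
relation `IsoRel` identifying isomorphic diagrams, quotienting by its span realizes the
vector space spanned by isomorphism classes of diagrams. -/
abbrev FreeD (k : ℕ) := Diagram k →₀ ℝ

noncomputable def fd {k : ℕ} (D : Diagram k) : FreeD k := Finsupp.single D 1

/-- Identify isomorphic diagrams. -/
def IsoRel (k : ℕ) : Set (FreeD k) :=
  {x | ∃ D E : Diagram k, Diagram.Iso D E ∧ x = fd D - fd E}

/-- The antisymmetry relation: reversing the cyclic ordering at one trivalent vertex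
(the `tau`-orbit of `v`) negates the diagram, i.e. `D + D' = 0`. -/
def ASRel (k : ℕ) : Set (FreeD k) :=
  {x | ∃ (D D' : Diagram k) (e : D.H ≃ D'.H) (v : D.H),
      D.tau v ≠ v ∧
      (∀ h, e (D.sig h) = D'.sig (e h)) ∧
      (∀ h, D.tau h = h → D'.color (e h) = D.color h) ∧
      (∀ h, (h = v ∨ h = D.tau v ∨ h = D.tau (D.tau v)) →
        D'.tau (e h) = e (D.tau (D.tau h))) ∧
      (∀ h, ¬(h = v ∨ h = D.tau v ∨ h = D.tau (D.tau v)) →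
        D'.tau (e h) = e (D.tau h)) ∧
      x = fd D + fd D'}

/-- The IHX relation `I - H + X = 0`.  In `DI` the edge `{a, b}` joins the trivalent
vertices `(a, h2, h1)` and `(b, h3, h4)` (cyclic orderings as recorded by `tau`);
`DH` and `DX` are the same diagram except that the two trivalent vertices are rewired
as `(a, h1, h3), (b, h4, h2)` resp. `(a, h1, h4), (b, h3, h2)`.  (With counterclockwise
cyclic orderings this is the standard I, H and X configurations on the four external
legs attached to `h1, h2, h3, h4`.) -/
def IHXRel (k : ℕ) : Set (FreeD k) :=
  {x | ∃ (DI DH DX : Diagram k) (eH : DI.H ≃ DH.H) (eX : DI.H ≃ DX.H)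
      (a b h1 h2 h3 h4 : DI.H),
      DI.sig a = b ∧
      ([a, b, h1, h2, h3, h4] : List DI.H).Nodup ∧
      DI.tau a = h2 ∧ DI.tau h2 = h1 ∧ DI.tau h1 = a ∧
      DI.tau b = h3 ∧ DI.tau h3 = h4 ∧ DI.tau h4 = b ∧
      (∀ h, eH (DI.sig h) = DH.sig (eH h)) ∧
      (∀ h, DI.tau h = h → DH.color (eH h) = DI.color h) ∧
      (∀ h, h ∉ ([a, b, h1, h2, h3, h4] : List DI.H) → eH (DI.tau h) = DH.tau (eH h)) ∧
      DH.tau (eH a) = eH h1 ∧ DH.tau (eH h1) = eH h3 ∧ DH.tau (eH h3) = eH a ∧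
      DH.tau (eH b) = eH h4 ∧ DH.tau (eH h4) = eH h2 ∧ DH.tau (eH h2) = eH b ∧
      (∀ h, eX (DI.sig h) = DX.sig (eX h)) ∧
      (∀ h, DI.tau h = h → DX.color (eX h) = DI.color h) ∧
      (∀ h, h ∉ ([a, b, h1, h2, h3, h4] : List DI.H) → eX (DI.tau h) = DX.tau (eX h)) ∧
      DX.tau (eX a) = eX h1 ∧ DX.tau (eX h1) = eX h4 ∧ DX.tau (eX h4) = eX a ∧
      DX.tau (eX b) = eX h3 ∧ DX.tau (eX h3) = eX h2 ∧ DX.tau (eX h2) = eX b ∧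
      x = fd DI - fd DH + fd DX}

/-- Diagrams with a boring component are zero. -/
def BoringRel (k : ℕ) : Set (FreeD k) :=
  {x | ∃ D : Diagram k, D.HasBoring ∧ x = fd D}

/-- A rooted tree: a unitrivalent graph which is a tree (Euler-count criterion), with a
distinguished (uncolored) univalent vertex `root`; the other univalent vertices carry
colors.  Used to form the link relations. -/
structure GraftTree (k : ℕ) where
  H : Type
  fin : Fintype H
  dec : DecidableEq H
  sig : H → H
  sig_invol : ∀ h, sig (sig h) = h
  sig_ne : ∀ h, sig h ≠ h
  tau : H → H
  tau_cube : ∀ h, tau (tau (tau h)) = h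
  root : H
  root_fix : tau root = root
  color : H → Fin k
  conn : ∀ h, Relation.ReflTransGen (fun a b => b = sig a ∨ b = tau a) root h
  tree : Nat.card H + 6 = 4 * Nat.card {h : H // tau h = h}

attribute [instance] GraftTree.fin GraftTree.dec

/-- The edge involution of the diagram obtained by grafting the rooted tree `X` at the
univalent vertex `u` of `E`: the edge of `E` at `u` is subdivided by a new trivalent
vertex `{root, false, true}`, whose half-edge `false` pairs with `u`, whose half-edge
`true` pairs with the old partner `E.sig u`, and whose half-edge `root` is paired
inside `X` (so the root edge of `X` is attached at the new vertex). -/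
def graftSig {k : ℕ} (E : Diagram k) (u : E.H) (X : GraftTree k) :
    E.H ⊕ (X.H ⊕ Bool) → E.H ⊕ (X.H ⊕ Bool)
  | Sum.inl h =>
    if h = u then Sum.inr (Sum.inr false)
    else if h = E.sig u then Sum.inr (Sum.inr true)
    else Sum.inl (E.sig h)
  | Sum.inr (Sum.inl x) => Sum.inr (Sum.inl (X.sig x))
  | Sum.inr (Sum.inr false) => Sum.inl u
  | Sum.inr (Sum.inr true) => Sum.inl (E.sig u)

/-- The vertex rotation of the grafted diagram: the root of `X` is merged into the new
trivalent vertex `(root, false, true)`; everything else is unchanged. -/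
def graftTau {k : ℕ} (E : Diagram k) (_u : E.H) (X : GraftTree k) :
    E.H ⊕ (X.H ⊕ Bool) → E.H ⊕ (X.H ⊕ Bool)
  | Sum.inl h => Sum.inl (E.tau h)
  | Sum.inr (Sum.inl x) =>
    if x = X.root then Sum.inr (Sum.inr false) else Sum.inr (Sum.inl (X.tau x))
  | Sum.inr (Sum.inr false) => Sum.inr (Sum.inr true)
  | Sum.inr (Sum.inr true) => Sum.inr (Sum.inl X.root)

def graftColor {k : ℕ} (E : Diagram k) (u : E.H) (X : GraftTree k) :
    E.H ⊕ (X.H ⊕ Bool) → Fin k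
  | Sum.inl h => E.color h
  | Sum.inr (Sum.inl x) => X.color x
  | Sum.inr (Sum.inr _) => E.color u

/-- `G` is (isomorphic to) the diagram obtained by grafting `X` at `u`. -/
def IsGraft {k : ℕ} (E : Diagram k) (u : E.H) (X : GraftTree k) (G : Diagram k) : Prop :=
  ∃ e : (E.H ⊕ (X.H ⊕ Bool)) ≃ G.H,
    (∀ p, e (graftSig E u X p) = G.sig (e p)) ∧
    (∀ p, e (graftTau E u X p) = G.tau (e p)) ∧
    (∀ p, graftTau E u X p = p → G.color (e p) = graftColor E u X p)

/-- The link relations (*): for every diagram `E`, color `i` and rooted tree `X`, the sum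
over all univalent vertices `u` of `E` of color `i` of the diagrams obtained by grafting
`X` at `u` is zero. -/
def LinkRel (k : ℕ) : Set (FreeD k) :=
  {x | ∃ (E : Diagram k) (i : Fin k) (X : GraftTree k) (g : E.H → Diagram k),
      (∀ u, E.tau u = u → E.color u = i → IsGraft E u X (g u)) ∧
      x = ∑ u ∈ Finset.univ.filter (fun u => E.tau u = u ∧ E.color u = i), fd (g u)}

/-- The relations defining `B^{hsl}(k)` (string links up to homotopy): isomorphism,
antisymmetry, IHX, and killing diagrams with boring components. -/
noncomputable def BhslRel (k : ℕ) : Submodule ℝ (FreeD k) :=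
  Submodule.span ℝ (IsoRel k ∪ ASRel k ∪ IHXRel k ∪ BoringRel k)

/-- The relations defining `B^{hl}(k)`: those of `B^{hsl}(k)` together with the link
relations (*). -/
noncomputable def BhlRel (k : ℕ) : Submodule ℝ (FreeD k) :=
  Submodule.span ℝ (IsoRel k ∪ ASRel k ∪ IHXRel k ∪ BoringRel k ∪ LinkRel k)

/-- The space `B^{hl}(k)` of unitrivalent diagrams for `k`-component links up to homotopy. -/
abbrev Bhl (k : ℕ) := FreeD k ⧸ BhlRel k

/-- The class of a diagram in `B^{hl}(k)`. -/
noncomputable def bhlClass {k : ℕ} (D : Diagram k) : Bhl k :=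
  Submodule.Quotient.mk (fd D)

/-!
If `D` has a boring component, `[D] = 0`. Otherwise let `C` be the given component, `x`, `y` its
legs colored `i`, `j`, and `w` the third half-edge at the trivalent vertex they share. Let `E` be
`D` with `C` replaced by a single chord joining `x` and `y`, let `X` be `C` with the legs at `x`
and `y` removed, rooted at `w`, and apply the link relation of color `i` to `E` and `X`.
Grafting `X` at `x` gives back `D`, up to isomorphism if the cyclic order at the shared vertex is
`(x, y, w)` and up to one antisymmetry otherwise. Grafting it at the `i`-end of one of the
`m(D;i,j)` chords of `D` colored `i` and `j` gives the same class, since `E` has an automorphism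
exchanging that chord with the chord `x`-`y`. Grafting it at any other leg `u` of color `i` gives
a boring diagram: the component of `u` is a tree with a leg of some color `c ∉ {i, j}`, and `X`
contains the leg of `C` colored `c`. So the link relation reads `±(1 + m(D;i,j)) [D] = 0`.
-/

lemma Relation.ReflTransGen.symm_of_involutive_of_cube {α : Type*} {s t : α → α}
    (hs : ∀ a, s (s a) = a) (ht : ∀ a, t (t (t a)) = a) {a b : α}
    (h : Relation.ReflTransGen (fun p q => q = s p ∨ q = t p) a b) :
    Relation.ReflTransGen (fun p q => q = s p ∨ q = t p) b a := by
  induction h with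
  | refl => rfl
  | tail _ hbc ih =>
    refine Relation.ReflTransGen.trans ?_ ih
    rcases hbc with rfl | rfl
    · exact .single (Or.inl (hs _).symm)
    · exact .tail (.single (Or.inr rfl)) (Or.inr (ht _).symm)

namespace Diagram

variable {k : ℕ} (D : Diagram k)

lemma tau_injective : Function.Injective D.tau :=
  Function.LeftInverse.injective (g := fun h => D.tau (D.tau h)) D.tau_cube

lemma sig_injective : Function.Injective D.sig :=
  Function.LeftInverse.injective D.sig_invol

variable {D}

lemma Reach.symm {a b : D.H} (h : D.Reach a b) : D.Reach b a :=
  Relation.ReflTransGen.symm_of_involutive_of_cube D.sig_invol D.tau_cube h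

lemma reach_sig (a : D.H) : D.Reach a (D.sig a) := .single (Or.inl rfl)

lemma reach_of_mem_compSet {h0 a b : D.H} (ha : a ∈ D.compSet h0) (hb : b ∈ D.compSet h0) :
    D.Reach a b :=
  Reach.symm ha |>.trans hb

lemma sig_mem_compSet_iff {h0 a : D.H} : D.sig a ∈ D.compSet h0 ↔ a ∈ D.compSet h0 :=
  ⟨fun h => D.sig_invol a ▸ h.tail (Or.inl rfl), fun h => h.tail (Or.inl rfl)⟩

lemma tau_mem_compSet_iff {h0 a : D.H} : D.tau a ∈ D.compSet h0 ↔ a ∈ D.compSet h0 :=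
  ⟨fun h => D.tau_cube a ▸ (h.tail (Or.inr rfl)).tail (Or.inr rfl), fun h => h.tail (Or.inr rfl)⟩

lemma pairwise_ne_of_tau_cycle {a b c : D.H} (hab : D.tau a = b) (hbc : D.tau b = c)
    (hca : D.tau c = a) (ha : D.tau a ≠ a) : a ≠ b ∧ b ≠ c ∧ c ≠ a := by
  refine ⟨fun h => ha (hab.trans h.symm), fun h => ?_, fun h => ha (by rw [← h, hca, h])⟩
  subst h
  exact ha (by rw [hab, ← hca, hbc])

lemma ne_of_tau_eq_self {a b : D.H} (ha : D.tau a = a) (hb : D.tau b ≠ b) : a ≠ b :=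
  fun h => hb (h ▸ ha)

lemma swap_tau {a b : D.H} (ha : D.tau a = a) (hb : D.tau b = b) (z : D.H) :
    Equiv.swap a b (D.tau z) = D.tau (Equiv.swap a b z) := by
  simpa [ha, hb] using D.tau_injective.swap_apply a b z

end Diagram

lemma GraftTree.tau_injective {k : ℕ} (X : GraftTree k) : Function.Injective X.tau :=
  Function.LeftInverse.injective (g := fun h => X.tau (X.tau h)) X.tau_cube

section Graft

variable {k : ℕ} (E : Diagram k) (u : E.H) (X : GraftTree k)

lemma graftSig_graftSig (p : E.H ⊕ (X.H ⊕ Bool)) : graftSig E u X (graftSig E u X p) = p := by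
  have hsu : E.sig u ≠ u := E.sig_ne u
  rcases p with h | z | (_ | _)
  · by_cases h1 : h = u
    · simp [graftSig, h1]
    by_cases h2 : h = E.sig u
    · simp [graftSig, h2, hsu]
    have h3 : E.sig h ≠ u := fun e => h2 (by rw [← e, E.sig_invol])
    have h4 : E.sig h ≠ E.sig u := fun e => h1 (E.sig_injective e)
    simp [graftSig, h1, h2, h3, h4, E.sig_invol]
  · simp [graftSig, X.sig_invol]
  · simp [graftSig]
  · simp [graftSig, hsu]

lemma graftSig_ne_self (p : E.H ⊕ (X.H ⊕ Bool)) : graftSig E u X p ≠ p := by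
  rcases p with h | z | (_ | _)
  · by_cases h1 : h = u
    · simp [graftSig, h1]
    by_cases h2 : h = E.sig u
    · simp [graftSig, h2, E.sig_ne u]
    simpa [graftSig, h1, h2] using E.sig_ne h
  · simpa [graftSig] using X.sig_ne z
  all_goals simp [graftSig]

lemma graftTau_cube (p : E.H ⊕ (X.H ⊕ Bool)) :
    graftTau E u X (graftTau E u X (graftTau E u X p)) = p := by
  rcases p with h | z | (_ | _)
  · simp [graftTau, E.tau_cube]
  · by_cases h1 : z = X.root
    · simp [graftTau, h1]
    have h2 : X.tau z ≠ X.root := fun e => h1 (X.tau_injective (by rw [e, X.root_fix]))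
    have h3 : X.tau (X.tau z) ≠ X.root :=
      fun e => h2 (X.tau_injective (by rw [e, X.root_fix]))
    simp [graftTau, h1, h2, h3, X.tau_cube]
  all_goals simp [graftTau]

abbrev GraftReach (p q : E.H ⊕ (X.H ⊕ Bool)) : Prop :=
  Relation.ReflTransGen (fun a b => b = graftSig E u X a ∨ b = graftTau E u X a) p q

variable {E u X}

lemma GraftReach.symm {p q : E.H ⊕ (X.H ⊕ Bool)} (h : GraftReach E u X p q) :
    GraftReach E u X q p :=
  Relation.ReflTransGen.symm_of_involutive_of_cube (graftSig_graftSig E u X)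
    (graftTau_cube E u X) h

lemma graftReach_inl_of_reach {a b : E.H} (h : E.Reach a b) :
    GraftReach E u X (.inl a) (.inl b) := by
  induction h with
  | refl => exact .refl
  | @tail b c _ hbc ih =>
    refine ih.trans ?_
    rcases hbc with rfl | rfl
    · by_cases h1 : b = u
      · rw [h1]
        exact .head (b := .inr (.inr false)) (Or.inl (by simp [graftSig])) <|
          .head (b := .inr (.inr true)) (Or.inr rfl) <| .single (Or.inl rfl)
      by_cases h2 : b = E.sig u
      · rw [h2, E.sig_invol]
        exact .head (b := .inr (.inr true)) (Or.inl (by simp [graftSig, E.sig_ne u])) <|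
          .head (b := .inr (.inl X.root)) (Or.inr rfl) <|
          .head (b := .inr (.inr false)) (Or.inr (by simp [graftTau])) <| .single (Or.inl rfl)
      · exact .single (Or.inl (by simp [graftSig, h1, h2]))
    · exact .single (Or.inr rfl)

lemma graftReach_root_inr (z : X.H) :
    GraftReach E u X (.inr (.inl X.root)) (.inr (.inl z)) := by
  induction X.conn z with
  | refl => exact .refl
  | @tail b c _ hbc ih =>
    refine ih.trans ?_
    rcases hbc with rfl | rfl
    · exact .single (Or.inl rfl)
    · by_cases h1 : b = X.root
      · rw [h1, X.root_fix]
      · exact .single (Or.inr (by simp [graftTau, h1]))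

lemma graftReach_inl_root : GraftReach E u X (.inl u) (.inr (.inl X.root)) :=
  .head (b := .inr (.inr false)) (Or.inl (by simp [graftSig])) <|
    .head (b := .inr (.inr true)) (Or.inr rfl) <| .single (Or.inr rfl)

lemma graft_conn (p : E.H ⊕ (X.H ⊕ Bool)) :
    ∃ p', GraftReach E u X p p' ∧ graftTau E u X p' = p' := by
  have toLeg (a : E.H) : ∃ p', GraftReach E u X (.inl a) p' ∧ graftTau E u X p' = p' := by
    obtain ⟨h', hpath, hfix⟩ := E.conn a
    exact ⟨.inl h', graftReach_inl_of_reach hpath, by simp [graftTau, hfix]⟩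
  rcases p with h | z | (_ | _)
  · exact toLeg h
  all_goals
    obtain ⟨p', hpath, hfix⟩ := toLeg u
    refine ⟨p', .trans ?_ hpath, hfix⟩
  · exact GraftReach.symm (graftReach_inl_root.trans (graftReach_root_inr z))
  · exact .single (Or.inl rfl)
  · exact .head (b := .inr (.inl X.root)) (Or.inr rfl) graftReach_inl_root.symm

noncomputable abbrev graftDiagram (E : Diagram k) (u : E.H) (X : GraftTree k) : Diagram k where
  H := E.H ⊕ (X.H ⊕ Bool)
  fin := inferInstance
  dec := inferInstance
  sig := graftSig E u X
  sig_invol := graftSig_graftSig E u X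
  sig_ne := graftSig_ne_self E u X
  tau := graftTau E u X
  tau_cube := graftTau_cube E u X
  color := graftColor E u X
  conn := graft_conn

lemma isGraft_graftDiagram : IsGraft E u X (graftDiagram E u X) :=
  ⟨Equiv.refl _, fun _ => rfl, fun _ => rfl, fun _ _ => rfl⟩

lemma iso_graftDiagram {E' : Diagram k} (e : E.H ≃ E'.H) (hsig : ∀ h, e (E.sig h) = E'.sig (e h))
    (htau : ∀ h, e (E.tau h) = E'.tau (e h))
    (hcol : ∀ h, E.tau h = h → E'.color (e h) = E.color h) :
    Diagram.Iso (graftDiagram E u X) (graftDiagram E' (e u) X) := by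
  refine ⟨Equiv.sumCongr e (Equiv.refl _), fun p => ?_, fun p => ?_, fun p hfix => ?_⟩
  · change Sum.map e id (graftSig E u X p) = graftSig E' (e u) X (Sum.map e id p)
    rcases p with h | z | (_ | _)
    · by_cases h1 : h = u
      · simp [graftSig, h1]
      by_cases h2 : h = E.sig u
      · simp [graftSig, h2, E.sig_ne u, E'.sig_ne (e u), hsig]
      have h2' : e h ≠ E'.sig (e u) := hsig u ▸ e.injective.ne h2
      simp [graftSig, h1, h2, h2', hsig]
    all_goals simp [graftSig, hsig]
  · change Sum.map e id (graftTau E u X p) = graftTau E' (e u) X (Sum.map e id p)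
    rcases p with h | z | (_ | _) <;> simp [graftTau, htau, apply_ite]
  · change graftTau E u X p = p at hfix
    change graftColor E' (e u) X (Sum.map e id p) = graftColor E u X p
    rcases p with h | z | (_ | _) <;> simp [graftTau, graftColor] at hfix ⊢
    exact hcol h hfix

end Graft

section Relations

variable {k : ℕ}

lemma bhlClass_eq_of_iso {A B : Diagram k} (h : A.Iso B) : bhlClass A = bhlClass B :=
  (Submodule.Quotient.eq _).mpr <|
    Submodule.subset_span (Or.inl (Or.inl (Or.inl (Or.inl ⟨A, B, h, rfl⟩))))

/-- Antisymmetry: `A'` is `A` with the cyclic order at the vertex of `v` reversed. -/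
lemma bhlClass_eq_neg_of_reverse {A A' : Diagram k} (e : A.H ≃ A'.H) (v : A.H)
    (hv : A.tau v ≠ v) (hsig : ∀ h, e (A.sig h) = A'.sig (e h))
    (hcol : ∀ h, A.tau h = h → A'.color (e h) = A.color h)
    (hat : ∀ h, (h = v ∨ h = A.tau v ∨ h = A.tau (A.tau v)) →
      A'.tau (e h) = e (A.tau (A.tau h)))
    (haway : ∀ h, ¬(h = v ∨ h = A.tau v ∨ h = A.tau (A.tau v)) → A'.tau (e h) = e (A.tau h)) :
    bhlClass A' = -bhlClass A := by
  have hmem : fd A + fd A' ∈ BhlRel k :=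
    Submodule.subset_span (Or.inl (Or.inl (Or.inl (Or.inr
      ⟨A, A', e, v, hv, hsig, hcol, hat, haway, rfl⟩))))
  refine eq_neg_of_add_eq_zero_right ?_
  rw [bhlClass, bhlClass, ← Submodule.Quotient.mk_add]
  exact (Submodule.Quotient.mk_eq_zero _).mpr hmem

lemma bhlClass_eq_zero_of_hasBoring {A : Diagram k} (h : A.HasBoring) : bhlClass A = 0 :=
  (Submodule.Quotient.mk_eq_zero _).mpr <|
    Submodule.subset_span (Or.inl (Or.inr ⟨A, h, rfl⟩))

lemma sum_bhlClass_graftDiagram_eq_zero (E : Diagram k) (i : Fin k) (X : GraftTree k) :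
    ∑ u ∈ Finset.univ.filter (fun u => E.tau u = u ∧ E.color u = i),
      bhlClass (graftDiagram E u X) = 0 := by
  have hmem : ∑ u ∈ Finset.univ.filter (fun u => E.tau u = u ∧ E.color u = i),
      fd (graftDiagram E u X) ∈ BhlRel k :=
    Submodule.subset_span (Or.inr ⟨E, i, X, fun u => graftDiagram E u X,
      fun u _ _ => isGraft_graftDiagram, rfl⟩)
  simp only [bhlClass, ← Submodule.mkQ_apply, ← map_sum]
  exact (Submodule.Quotient.mk_eq_zero _).mpr hmem

end Relations

lemma Diagram.exists_mem_univIn_color_ne {k : ℕ} {D : Diagram k} {u : D.H}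
    (hb : ¬ D.IsBoringAt u) (hu : D.tau u = u) {j : Fin k}
    (hchord : ¬ (D.tau (D.sig u) = D.sig u ∧ D.color (D.sig u) = j)) :
    ∃ z ∈ D.univIn u, D.color z ≠ D.color u ∧ D.color z ≠ j := by
  simp only [Diagram.IsBoringAt, not_or, not_exists, not_and, not_not] at hb
  obtain ⟨hinj, htree⟩ := hb
  by_contra! hcol
  have hu_mem : u ∈ D.univIn u := ⟨.refl, hu⟩
  have hpair : ({u, D.sig u} : Set D.H) ⊆ D.compSet u := by
    rintro _ (rfl | rfl)
    exacts [.refl, Diagram.reach_sig u]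
  have hpair_card : ({u, D.sig u} : Set D.H).ncard = 2 := Set.ncard_pair (D.sig_ne u).symm
  have hlegs : (D.univIn u).ncard ≤ 2 := by
    have : Set.InjOn D.color (D.univIn u) := fun a ha b hb hab => by
      by_contra hne; exact hinj a ha b hb hne hab
    rw [← this.ncard_image]
    refine (Set.ncard_le_ncard (t := {D.color u, j}) ?_).trans
      ((Set.ncard_insert_le _ _).trans (by simp))
    rintro _ ⟨z, hz, rfl⟩
    by_cases h : D.color z = D.color u
    exacts [Or.inl h, Or.inr (hcol z hz h)]
  have hcomp_card : (D.compSet u).ncard ≤ 2 := by unfold Diagram.IsTreeAt at htree; omega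
  have hcomp : ({u, D.sig u} : Set D.H) = D.compSet u :=
    Set.eq_of_subset_of_ncard_le hpair (hpair_card ▸ hcomp_card)
  obtain ⟨z, hz, hzu⟩ := Set.exists_ne_of_one_lt_ncard (s := D.univIn u)
    (by have := Set.ncard_le_ncard hpair; unfold Diagram.IsTreeAt at htree; omega) u
  have hz_sig : z = D.sig u := by
    have : z ∈ ({u, D.sig u} : Set D.H) := hcomp ▸ hz.1
    exact this.resolve_left hzu
  subst hz_sig
  exact hchord ⟨hz.2, hcol _ hz fun h => hzu (hinj _ hz u hu_mem hzu h).elim⟩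

lemma Set.card_filter_val_mem {α : Type*} {s A : Set α} [Fintype s] (hA : A ⊆ s)
    [DecidablePred fun u : s => u.1 ∈ A] :
    (Finset.univ.filter fun u : s => u.1 ∈ A).card = A.ncard := by
  rw [← Fintype.card_subtype, ← Nat.card_eq_fintype_card,
    Nat.card_congr (Equiv.subtypeSubtypeEquivSubtype fun h => hA h), Nat.card_coe_set_eq]

/-- The hypotheses of the theorem when `D` has no boring component: the legs `x` and `y` form
a cherry of the component `C` of `h0`. -/
structure Cherry (k : ℕ) where
  D : Diagram k
  h0 : D.H
  isTree : D.IsTreeAt h0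
  existsUnique_color : ∀ c : Fin k, ∃! z : D.H, z ∈ D.univIn h0 ∧ D.color z = c
  i : Fin k
  j : Fin k
  i_ne_j : i ≠ j
  x : D.H
  y : D.H
  x_mem : x ∈ D.univIn h0
  y_mem : y ∈ D.univIn h0
  color_x : D.color x = i
  color_y : D.color y = j
  tau_sig_x_ne : D.tau (D.sig x) ≠ D.sig x
  adjacent : D.sig y = D.tau (D.sig x) ∨ D.sig y = D.tau (D.tau (D.sig x))
  not_hasBoring : ¬ D.HasBoring

namespace Cherry

variable {k : ℕ} (S : Cherry k)

abbrev C : Set S.D.H := S.D.compSet S.h0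

def sx : S.D.H := S.D.sig S.x

def sy : S.D.H := S.D.sig S.y

/-- The third half-edge at the trivalent vertex shared by `x` and `y`. -/
noncomputable def w : S.D.H := if S.D.tau S.sx = S.sy then S.D.tau S.sy else S.D.tau S.sx

lemma cyclic_order :
    (S.D.tau S.sx = S.sy ∧ S.D.tau S.sy = S.w ∧ S.D.tau S.w = S.sx) ∨
      (S.D.tau S.sx = S.w ∧ S.D.tau S.w = S.sy ∧ S.D.tau S.sy = S.sx) := by
  by_cases h : S.D.tau S.sx = S.sy
  · have hw : S.w = S.D.tau S.sy := if_pos h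
    exact .inl ⟨h, hw.symm, by rw [hw, ← h, S.D.tau_cube]⟩
  · have hw : S.w = S.D.tau S.sx := if_neg h
    have hsy : S.sy = S.D.tau (S.D.tau S.sx) := S.adjacent.resolve_left (Ne.symm h)
    exact .inr ⟨hw.symm, by rw [hw, hsy], by rw [hsy, S.D.tau_cube]⟩

lemma tau_x : S.D.tau S.x = S.x := S.x_mem.2
lemma tau_y : S.D.tau S.y = S.y := S.y_mem.2
lemma x_mem_C : S.x ∈ S.C := S.x_mem.1
lemma y_mem_C : S.y ∈ S.C := S.y_mem.1
lemma sx_mem_C : S.sx ∈ S.C := Diagram.sig_mem_compSet_iff.mpr S.x_mem_C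
lemma sy_mem_C : S.sy ∈ S.C := Diagram.sig_mem_compSet_iff.mpr S.y_mem_C

lemma w_mem_C : S.w ∈ S.C := by
  rcases S.cyclic_order with ⟨-, h, -⟩ | ⟨h, -, -⟩
  · exact h ▸ Diagram.tau_mem_compSet_iff.mpr S.sy_mem_C
  · exact h ▸ Diagram.tau_mem_compSet_iff.mpr S.sx_mem_C

lemma x_ne_y : S.x ≠ S.y := fun h => S.i_ne_j (S.color_x ▸ S.color_y ▸ congrArg S.D.color h)

lemma sx_ne_sy : S.sx ≠ S.sy := S.D.sig_injective.ne S.x_ne_y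

lemma tau_sx_ne : S.D.tau S.sx ≠ S.sx := S.tau_sig_x_ne

lemma sy_ne_w : S.sy ≠ S.w := by
  rcases S.cyclic_order with ⟨h1, h2, h3⟩ | ⟨h1, h2, h3⟩
  · exact (S.D.pairwise_ne_of_tau_cycle h1 h2 h3 S.tau_sx_ne).2.1
  · exact (S.D.pairwise_ne_of_tau_cycle h1 h2 h3 S.tau_sx_ne).2.1.symm

lemma sx_ne_w : S.sx ≠ S.w := by
  rcases S.cyclic_order with ⟨h1, h2, h3⟩ | ⟨h1, h2, h3⟩
  · exact (S.D.pairwise_ne_of_tau_cycle h1 h2 h3 S.tau_sx_ne).2.2.symm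
  · exact (S.D.pairwise_ne_of_tau_cycle h1 h2 h3 S.tau_sx_ne).1

lemma tau_sy_ne : S.D.tau S.sy ≠ S.sy := by
  rcases S.cyclic_order with ⟨-, h, -⟩ | ⟨-, -, h⟩ <;> rw [h]
  exacts [S.sy_ne_w.symm, S.sx_ne_sy]

lemma tau_w_ne : S.D.tau S.w ≠ S.w := by
  rcases S.cyclic_order with ⟨-, -, h⟩ | ⟨-, h, -⟩ <;> rw [h]
  exacts [S.sx_ne_w, S.sy_ne_w]

/-! ### The diagram `E` -/

def chordSet : Set S.D.H := {h | h ∉ S.C ∨ h = S.x ∨ h = S.y}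

noncomputable def chordSig (h : S.D.H) : S.D.H :=
  if h = S.x then S.y else if h = S.y then S.x else S.D.sig h

variable {S}

lemma notMem_C_of_mem_chordSet {h : S.D.H} (hh : h ∈ S.chordSet) (hx : h ≠ S.x)
    (hy : h ≠ S.y) : h ∉ S.C :=
  hh.resolve_right (not_or.mpr ⟨hx, hy⟩)

lemma sig_ne_x_of_notMem_C {h : S.D.H} (hh : h ∉ S.C) : S.D.sig h ≠ S.x :=
  fun e => hh (Diagram.sig_mem_compSet_iff.mp (e ▸ S.x_mem_C))

lemma sig_ne_y_of_notMem_C {h : S.D.H} (hh : h ∉ S.C) : S.D.sig h ≠ S.y :=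
  fun e => hh (Diagram.sig_mem_compSet_iff.mp (e ▸ S.y_mem_C))

lemma chordSig_of_ne {h : S.D.H} (hx : h ≠ S.x) (hy : h ≠ S.y) : S.chordSig h = S.D.sig h := by
  simp [chordSig, hx, hy]

lemma chordSig_mem {h : S.D.H} (hh : h ∈ S.chordSet) : S.chordSig h ∈ S.chordSet := by
  by_cases hx : h = S.x
  · simp [chordSig, hx, chordSet]
  by_cases hy : h = S.y
  · simp [chordSig, hy, S.x_ne_y.symm, chordSet]
  rw [chordSig_of_ne hx hy]
  exact .inl fun hc => notMem_C_of_mem_chordSet hh hx hy (Diagram.sig_mem_compSet_iff.mp hc)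

lemma chordSig_chordSig {h : S.D.H} (hh : h ∈ S.chordSet) : S.chordSig (S.chordSig h) = h := by
  by_cases hx : h = S.x
  · simp [chordSig, hx, S.x_ne_y.symm]
  by_cases hy : h = S.y
  · simp [chordSig, hy, S.x_ne_y.symm]
  have hC := notMem_C_of_mem_chordSet hh hx hy
  rw [chordSig_of_ne hx hy, chordSig_of_ne (sig_ne_x_of_notMem_C hC)
    (sig_ne_y_of_notMem_C hC), S.D.sig_invol]

lemma chordSig_ne_self (h : S.D.H) : S.chordSig h ≠ h := by
  by_cases hx : h = S.x
  · simp [chordSig, hx, S.x_ne_y.symm]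
  by_cases hy : h = S.y
  · simp [chordSig, hy, S.x_ne_y, S.x_ne_y.symm]
  rw [chordSig_of_ne hx hy]
  exact S.D.sig_ne h

lemma tau_mem_chordSet {h : S.D.H} (hh : h ∈ S.chordSet) : S.D.tau h ∈ S.chordSet := by
  rcases hh with hC | rfl | rfl
  · exact .inl (Diagram.tau_mem_compSet_iff.not.mpr hC)
  · exact .inr (.inl S.tau_x)
  · exact .inr (.inr S.tau_y)

variable (S)

noncomputable def chordSigSub (h : S.chordSet) : S.chordSet := ⟨S.chordSig h, chordSig_mem h.2⟩

def tauSub (h : S.chordSet) : S.chordSet := ⟨S.D.tau h, tau_mem_chordSet h.2⟩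

variable {S}

/-- A path of `D` starting outside `C` never enters `C`, so it is a path of `E`. -/
lemma exists_reach_chord {a b : S.D.H} (ha : a ∉ S.C) (hr : S.D.Reach a b) :
    ∃ hb : b ∉ S.C, Relation.ReflTransGen (fun p q => q = S.chordSigSub p ∨ q = S.tauSub p)
      ⟨a, .inl ha⟩ ⟨b, .inl hb⟩ := by
  induction hr with
  | refl => exact ⟨ha, .refl⟩
  | @tail b c _ hbc ih =>
    obtain ⟨hb, hpath⟩ := ih
    have hbx : b ≠ S.x := fun e => hb (e ▸ S.x_mem_C)
    have hby : b ≠ S.y := fun e => hb (e ▸ S.y_mem_C)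
    rcases hbc with rfl | rfl
    · refine ⟨Diagram.sig_mem_compSet_iff.not.mpr hb, hpath.tail (.inl ?_)⟩
      exact Subtype.ext (chordSig_of_ne hbx hby).symm
    · exact ⟨Diagram.tau_mem_compSet_iff.not.mpr hb, hpath.tail (.inr rfl)⟩

variable (S)

noncomputable def chordDiagram : Diagram k where
  H := S.chordSet
  fin := (Set.toFinite _).fintype
  dec := inferInstance
  sig := S.chordSigSub
  sig_invol h := Subtype.ext (chordSig_chordSig h.2)
  sig_ne h := fun e => chordSig_ne_self h.1 (congrArg Subtype.val e)
  tau := S.tauSub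
  tau_cube h := Subtype.ext (S.D.tau_cube h)
  color h := S.D.color h
  conn := by
    rintro ⟨h, hC | hx | hy⟩
    · obtain ⟨h', hpath, hfix⟩ := S.D.conn h
      obtain ⟨hh', hpath'⟩ := exists_reach_chord hC hpath
      exact ⟨⟨h', .inl hh'⟩, hpath', Subtype.ext hfix⟩
    · exact ⟨_, .refl, Subtype.ext (hx ▸ S.tau_x)⟩
    · exact ⟨_, .refl, Subtype.ext (hy ▸ S.tau_y)⟩

/-! ### The rooted tree `X` -/

def prunedSet : Set S.D.H := {z | z ∈ S.C ∧ z ≠ S.x ∧ z ≠ S.sx ∧ z ≠ S.y ∧ z ≠ S.sy}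

variable {S}

lemma w_mem_prunedSet : S.w ∈ S.prunedSet :=
  ⟨S.w_mem_C, (S.D.ne_of_tau_eq_self S.tau_x S.tau_w_ne).symm, S.sx_ne_w.symm,
    (S.D.ne_of_tau_eq_self S.tau_y S.tau_w_ne).symm, S.sy_ne_w.symm⟩

lemma sig_mem_prunedSet {z : S.D.H} (hz : z ∈ S.prunedSet) : S.D.sig z ∈ S.prunedSet := by
  obtain ⟨hC, hx, hsx, hy, hsy⟩ := hz
  refine ⟨Diagram.sig_mem_compSet_iff.mpr hC, fun e => hsx ?_, fun e => hx ?_,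
    fun e => hsy ?_, fun e => hy ?_⟩
  · rw [sx, ← e, S.D.sig_invol]
  · exact S.D.sig_injective e
  · rw [sy, ← e, S.D.sig_invol]
  · exact S.D.sig_injective e

lemma tau_mem_prunedSet {z : S.D.H} (hz : z ∈ S.prunedSet) (hw : z ≠ S.w) :
    S.D.tau z ∈ S.prunedSet := by
  obtain ⟨hC, hx, hsx, hy, hsy⟩ := hz
  refine ⟨Diagram.tau_mem_compSet_iff.mpr hC, fun e => hx ?_, fun e => ?_, fun e => hy ?_,
    fun e => ?_⟩
  · exact S.D.tau_injective (e.trans S.tau_x.symm)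
  · rcases S.cyclic_order with ⟨-, -, h⟩ | ⟨-, -, h⟩
    exacts [hw (S.D.tau_injective (e.trans h.symm)), hsy (S.D.tau_injective (e.trans h.symm))]
  · exact S.D.tau_injective (e.trans S.tau_y.symm)
  · rcases S.cyclic_order with ⟨h, -, -⟩ | ⟨-, h, -⟩
    exacts [hsx (S.D.tau_injective (e.trans h.symm)), hw (S.D.tau_injective (e.trans h.symm))]

lemma tau_ne_w_of_mem_prunedSet {z : S.D.H} (hz : z ∈ S.prunedSet) : S.D.tau z ≠ S.w := by
  intro e
  rcases S.cyclic_order with ⟨-, h, -⟩ | ⟨h, -, -⟩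
  exacts [hz.2.2.2.2 (S.D.tau_injective (e.trans h.symm)),
    hz.2.2.1 (S.D.tau_injective (e.trans h.symm))]

variable (S)

noncomputable def prunedTau (z : S.prunedSet) : S.prunedSet :=
  if hw : z.1 = S.w then z else ⟨S.D.tau z, tau_mem_prunedSet z.2 hw⟩

variable {S}

lemma prunedTau_of_ne {z : S.prunedSet} (hw : z.1 ≠ S.w) :
    (S.prunedTau z).1 = S.D.tau z := by
  simp [prunedTau, hw]

lemma prunedTau_cube (z : S.prunedSet) : S.prunedTau (S.prunedTau (S.prunedTau z)) = z := by
  by_cases hw : z.1 = S.w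
  · simp [prunedTau, hw]
  have h1 : (S.prunedTau z).1 = S.D.tau z := prunedTau_of_ne hw
  have h2 : (S.prunedTau (S.prunedTau z)).1 = S.D.tau (S.D.tau z) := by
    rw [prunedTau_of_ne (h1 ▸ tau_ne_w_of_mem_prunedSet z.2), h1]
  apply Subtype.ext
  rw [prunedTau_of_ne (h2 ▸ tau_ne_w_of_mem_prunedSet (tau_mem_prunedSet z.2 hw)), h2,
    S.D.tau_cube]

/-- Inside `C`, a path to `w` only leaves `X` through `w` itself. -/
lemma reflTransGen_w_of_reach {a : S.D.H} (hr : S.D.Reach a S.w) (ha : a ∈ S.prunedSet) :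
    Relation.ReflTransGen (fun p q => q = ⟨S.D.sig p, sig_mem_prunedSet p.2⟩ ∨ q = S.prunedTau p)
      ⟨a, ha⟩ ⟨S.w, w_mem_prunedSet⟩ := by
  induction hr using Relation.ReflTransGen.head_induction_on with
  | refl => exact .refl
  | @head a c hstep _ ih =>
    by_cases haw : a = S.w
    · subst haw; exact .refl
    rcases hstep with rfl | rfl
    · exact .head (.inl rfl) (ih (sig_mem_prunedSet ha))
    · exact .head (.inr (Subtype.ext (prunedTau_of_ne (z := ⟨a, ha⟩) haw).symm))
        (ih (tau_mem_prunedSet ha haw))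

variable (S)

lemma ncard_univIn : (S.D.univIn S.h0).ncard = k := by
  have hbij : Function.Bijective (fun z : S.D.univIn S.h0 => S.D.color z) := by
    refine ⟨fun a b hab => Subtype.ext ?_, fun c => ?_⟩
    · obtain ⟨_, -, huniq⟩ := S.existsUnique_color (S.D.color a)
      exact (huniq a ⟨a.2, rfl⟩).trans (huniq b ⟨b.2, hab.symm⟩).symm
    · obtain ⟨z, hz, -⟩ := S.existsUnique_color c
      exact ⟨⟨z, hz.1⟩, hz.2⟩
  simpa [Nat.card_coe_set_eq] using Nat.card_eq_of_bijective _ hbij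

lemma ncard_C : S.C.ncard + 6 = 4 * k := by
  have := S.isTree
  rwa [Diagram.IsTreeAt, S.ncard_univIn] at this

lemma natCard_prunedSet : Nat.card S.prunedSet + 4 = S.C.ncard := by
  have hsub : ({S.x, S.sx, S.y, S.sy} : Set S.D.H) ⊆ S.C := by
    rintro _ (rfl | rfl | rfl | rfl)
    exacts [S.x_mem_C, S.sx_mem_C, S.y_mem_C, S.sy_mem_C]
  have hx_sx := S.D.ne_of_tau_eq_self S.tau_x S.tau_sx_ne
  have hx_sy := S.D.ne_of_tau_eq_self S.tau_x S.tau_sy_ne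
  have hy_sx := S.D.ne_of_tau_eq_self S.tau_y S.tau_sx_ne
  have hy_sy := S.D.ne_of_tau_eq_self S.tau_y S.tau_sy_ne
  have hfour : ({S.x, S.sx, S.y, S.sy} : Set S.D.H).ncard = 4 := by
    rw [Set.ncard_insert_of_notMem (by simp [hx_sx, S.x_ne_y, hx_sy]),
      Set.ncard_insert_of_notMem (by simp [hy_sx.symm, S.sx_ne_sy]),
      Set.ncard_pair hy_sy]
  have hdiff : S.prunedSet = S.C \ {S.x, S.sx, S.y, S.sy} := by
    ext z
    simp only [Set.mem_sdiff, Set.mem_insert_iff, Set.mem_singleton_iff, not_or]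
    rfl
  have := Set.ncard_le_ncard hsub
  rw [Nat.card_coe_set_eq, hdiff, Set.ncard_sdiff hsub, hfour]
  omega

lemma prunedTau_eq_self_iff {z : S.prunedSet} :
    S.prunedTau z = z ↔ z.1 = S.w ∨ z.1 ∈ S.D.univIn S.h0 \ {S.x, S.y} := by
  by_cases hw : z.1 = S.w
  · simp [prunedTau, hw]
  rw [← Subtype.coe_inj, prunedTau_of_ne hw, or_iff_right hw]
  obtain ⟨hC, hx, -, hy, -⟩ := z.2
  exact ⟨fun h => ⟨⟨hC, h⟩, by simp [hx, hy]⟩, fun h => h.1.2⟩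

lemma natCard_prunedTau_fixed :
    Nat.card {z : S.prunedSet // S.prunedTau z = z} = (S.D.univIn S.h0 \ {S.x, S.y}).ncard + 1 := by
  have hset : {a | ∃ h : a ∈ S.prunedSet, S.prunedTau ⟨a, h⟩ = ⟨a, h⟩}
      = insert S.w (S.D.univIn S.h0 \ {S.x, S.y}) := by
    ext a
    simp only [prunedTau_eq_self_iff, Set.mem_ofPred_eq, Set.mem_insert_iff]
    refine ⟨fun ⟨_, h⟩ => h, fun h => ⟨?_, h⟩⟩
    rcases h with rfl | ⟨⟨hC, hfix⟩, hxy⟩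
    · exact w_mem_prunedSet
    simp only [Set.mem_insert_iff, Set.mem_singleton_iff, not_or] at hxy
    exact ⟨hC, hxy.1, S.D.ne_of_tau_eq_self hfix S.tau_sx_ne, hxy.2,
      S.D.ne_of_tau_eq_self hfix S.tau_sy_ne⟩
  rw [Nat.card_congr (Equiv.subtypeSubtypeEquivSubtypeExists _ _), ← Set.ncard_insert_of_notMem
    (fun h => S.tau_w_ne h.1.2) (Set.toFinite _), ← hset]
  rfl

lemma ncard_univIn_diff : (S.D.univIn S.h0 \ {S.x, S.y}).ncard + 2 = k := by
  have hsub : ({S.x, S.y} : Set S.D.H) ⊆ S.D.univIn S.h0 := by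
    rintro _ (rfl | rfl)
    exacts [S.x_mem, S.y_mem]
  have := Set.ncard_le_ncard hsub
  rw [Set.ncard_sdiff hsub, Set.ncard_pair S.x_ne_y, S.ncard_univIn] at *
  omega

noncomputable def prunedTree : GraftTree k where
  H := S.prunedSet
  fin := (Set.toFinite _).fintype
  dec := inferInstance
  sig z := ⟨S.D.sig z, sig_mem_prunedSet z.2⟩
  sig_invol z := Subtype.ext (S.D.sig_invol z)
  sig_ne z e := S.D.sig_ne z (congrArg Subtype.val e)
  tau := S.prunedTau
  tau_cube := prunedTau_cube
  root := ⟨S.w, w_mem_prunedSet⟩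
  root_fix := by simp [prunedTau]
  color z := S.D.color z
  conn z := Relation.ReflTransGen.symm_of_involutive_of_cube
    (fun p => Subtype.ext (S.D.sig_invol p)) prunedTau_cube
    (reflTransGen_w_of_reach (Diagram.reach_of_mem_compSet z.2.1 S.w_mem_C) z.2)
  tree := by
    have := S.ncard_C
    have := S.natCard_prunedSet
    have := S.natCard_prunedTau_fixed
    have := S.ncard_univIn_diff
    omega

/-! ### Grafting `X` at `x` and at the ends of chords -/

def xE : S.chordDiagram.H := ⟨S.x, .inr (.inl rfl)⟩

noncomputable abbrev graftX : Diagram k := graftDiagram S.chordDiagram S.xE S.prunedTree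

variable {S}

lemma notMem_prunedSet_of_mem_chordSet {h : S.D.H} (hh : h ∈ S.chordSet) : h ∉ S.prunedSet :=
  fun hp => hp.2.1 ((hh.resolve_left (not_not.mpr hp.1)).resolve_right hp.2.2.2.1)

lemma sx_notMem_chordSet : S.sx ∉ S.chordSet := by
  rintro (h | h | h)
  exacts [h S.sx_mem_C, S.D.ne_of_tau_eq_self S.tau_x S.tau_sx_ne h.symm,
    S.D.ne_of_tau_eq_self S.tau_y S.tau_sx_ne h.symm]

lemma sy_notMem_chordSet : S.sy ∉ S.chordSet := by
  rintro (h | h | h)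
  exacts [h S.sy_mem_C, S.D.ne_of_tau_eq_self S.tau_x S.tau_sy_ne h.symm,
    S.D.ne_of_tau_eq_self S.tau_y S.tau_sy_ne h.symm]

variable (S)

/-- The half-edges of `D` are those of `E` and of `X`, together with the two new half-edges
`sx` and `sy` at the vertex where `X` is grafted. -/
def graftXFun : S.chordSet ⊕ (S.prunedSet ⊕ Bool) → S.D.H
  | .inl h => h
  | .inr (.inl z) => z
  | .inr (.inr false) => S.sx
  | .inr (.inr true) => S.sy

open scoped Classical in
noncomputable def graftXInv (h : S.D.H) : S.chordSet ⊕ (S.prunedSet ⊕ Bool) :=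
  if h₁ : h ∈ S.chordSet then .inl ⟨h, h₁⟩
  else if h₂ : h ∈ S.prunedSet then .inr (.inl ⟨h, h₂⟩)
  else if h = S.sx then .inr (.inr false) else .inr (.inr true)

noncomputable def graftXEquiv : S.graftX.H ≃ S.D.H where
  toFun := S.graftXFun
  invFun := S.graftXInv
  left_inv := by
    have hsx : S.sx ∉ S.prunedSet := fun h => h.2.2.1 rfl
    have hsy : S.sy ∉ S.prunedSet := fun h => h.2.2.2.2 rfl
    rintro (h | z | (_ | _))
    · exact dif_pos h.2
    · exact (dif_neg (notMem_prunedSet_of_mem_chordSet.mt (not_not.mpr z.2))).trans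
        (dif_pos z.2)
    · exact (dif_neg sx_notMem_chordSet).trans ((dif_neg hsx).trans (if_pos rfl))
    · exact (dif_neg sy_notMem_chordSet).trans ((dif_neg hsy).trans (if_neg S.sx_ne_sy.symm))
  right_inv h := by
    unfold graftXInv
    split_ifs with h₁ h₂ h₃
    · rfl
    · rfl
    · exact h₃.symm
    simp only [chordSet, prunedSet, Set.mem_ofPred_eq, not_or, not_and, not_not] at h₁ h₂
    exact (h₂ h₁.1 h₁.2.1 h₃ h₁.2.2).symm

lemma chordSig_x : S.chordDiagram.sig S.xE = ⟨S.y, .inr (.inr rfl)⟩ :=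
  Subtype.ext (by simp [chordDiagram, chordSigSub, chordSig, xE])

lemma graftXEquiv_sig (p : S.graftX.H) :
    S.graftXEquiv (S.graftX.sig p) = S.D.sig (S.graftXEquiv p) := by
  change S.graftXFun (graftSig S.chordDiagram S.xE S.prunedTree p) = S.D.sig (S.graftXFun p)
  rcases p with h | z | (_ | _)
  · by_cases h₁ : h = S.xE
    · subst h₁
      simp only [graftSig, ↓reduceIte]
      rfl
    by_cases h₂ : h = S.chordDiagram.sig S.xE
    · subst h₂
      simp only [graftSig, if_neg (S.chordDiagram.sig_ne S.xE), ↓reduceIte, graftXFun]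
      rw [chordSig_x]
      rfl
    have hx : h.1 ≠ S.x := fun e => h₁ (Subtype.ext e)
    have hy : h.1 ≠ S.y := fun e => h₂ (by rw [chordSig_x]; exact Subtype.ext e)
    simp only [graftSig, h₁, h₂, if_false, graftXFun]
    exact chordSig_of_ne hx hy
  · rfl
  · exact (S.D.sig_invol S.x).symm
  · change (S.chordDiagram.sig S.xE).1 = S.D.sig S.sy
    rw [chordSig_x, sy, S.D.sig_invol]

lemma graftXEquiv_tau {p : S.graftX.H}
    (hp : p ≠ .inr (.inr false) ∧ p ≠ .inr (.inr true) ∧ p ≠ .inr (.inl S.prunedTree.root)) :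
    S.graftXEquiv (S.graftX.tau p) = S.D.tau (S.graftXEquiv p) := by
  change S.graftXFun (graftTau S.chordDiagram S.xE S.prunedTree p) = S.D.tau (S.graftXFun p)
  rcases p with h | z | (_ | _)
  · rfl
  · have hz : z ≠ S.prunedTree.root := fun e => hp.2.2 (e ▸ rfl)
    simp only [graftTau, hz, if_false, graftXFun]
    exact prunedTau_of_ne fun e => hz (Subtype.ext e)
  · exact absurd rfl hp.1
  · exact absurd rfl hp.2.1

lemma graftXEquiv_color {p : S.graftX.H} (hp : S.graftX.tau p = p) :
    S.D.color (S.graftXEquiv p) = S.graftX.color p := by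
  rcases p with h | z | (_ | _)
  · rfl
  · rfl
  all_goals simp [graftTau] at hp

/-- Depending on the cyclic order at the vertex shared by `x` and `y`, grafting `X` back at `x`
gives `D` itself or `D` with the cyclic order at that vertex reversed. -/
lemma bhlClass_graftX : bhlClass S.graftX = bhlClass S.D ∨ bhlClass S.graftX = -bhlClass S.D := by
  have hroot : S.graftX.tau (.inr (.inl S.prunedTree.root)) = .inr (.inr false) := by
    simp [graftTau]
  rcases S.cyclic_order with ⟨h₁, h₂, h₃⟩ | ⟨h₁, h₂, h₃⟩
  · refine .inl (bhlClass_eq_of_iso ⟨S.graftXEquiv, S.graftXEquiv_sig, fun p => ?_,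
      fun p hp => S.graftXEquiv_color hp⟩)
    by_cases hp : p ≠ .inr (.inr false) ∧ p ≠ .inr (.inr true) ∧
        p ≠ .inr (.inl S.prunedTree.root)
    · exact S.graftXEquiv_tau hp
    simp only [not_and_or, not_not] at hp
    rcases hp with rfl | rfl | rfl
    exacts [h₁.symm, h₂.symm, hroot ▸ h₃.symm]
  · refine .inr (neg_eq_iff_eq_neg.mp (bhlClass_eq_neg_of_reverse S.graftXEquiv
      (.inr (.inr false)) (by simp [graftTau]) S.graftXEquiv_sig
      (fun p hp => S.graftXEquiv_color hp) ?_ ?_).symm)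
    · rintro p (rfl | rfl | rfl)
      · exact h₁
      all_goals rw [S.graftX.tau_cube]
      exacts [h₃, h₂]
    · intro p hp
      simp only [not_or] at hp
      exact (S.graftXEquiv_tau ⟨hp.1, hp.2.1, hp.2.2⟩).symm

/-- `D.m i j` is the cardinality of this set, by definition. -/
def chordLegs : Set S.D.H :=
  {z | S.D.tau z = z ∧ S.D.tau (S.D.sig z) = S.D.sig z ∧ S.D.color z = S.i ∧
    S.D.color (S.D.sig z) = S.j}

variable {S}

lemma notMem_C_of_mem_chordLegs {m : S.D.H} (hm : m ∈ S.chordLegs) : m ∉ S.C := by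
  intro hC
  obtain ⟨_, -, huniq⟩ := S.existsUnique_color S.i
  have hmx : m = S.x := (huniq m ⟨⟨hC, hm.1⟩, hm.2.2.1⟩).trans (huniq S.x ⟨S.x_mem, S.color_x⟩).symm
  exact S.tau_sig_x_ne (hmx ▸ hm.2.1)

lemma mem_chordSet_of_mem_chordLegs {m : S.D.H} (hm : m ∈ S.chordLegs) : m ∈ S.chordSet :=
  .inl (notMem_C_of_mem_chordLegs hm)

variable (S)

/-- For `m ∈ chordLegs`, an automorphism of `E` exchanging the chords `x`-`y` and `m`-`sig m`. -/
def chordSwap (m : S.D.H) : Equiv.Perm S.D.H := Equiv.swap S.x m * Equiv.swap S.y (S.D.sig m)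

section chordSwap

variable {S} {m : S.D.H} (hm : m ∈ S.chordLegs)
include hm

lemma ne_of_mem_chordLegs :
    S.x ≠ m ∧ S.x ≠ S.D.sig m ∧ S.y ≠ m ∧ S.y ≠ S.D.sig m ∧ m ≠ S.D.sig m := by
  have hmC := notMem_C_of_mem_chordLegs hm
  have hsmC : S.D.sig m ∉ S.C := Diagram.sig_mem_compSet_iff.not.mpr hmC
  exact ⟨fun e => hmC (e ▸ S.x_mem_C), fun e => hsmC (e ▸ S.x_mem_C),
    fun e => hmC (e ▸ S.y_mem_C), fun e => hsmC (e ▸ S.y_mem_C), (S.D.sig_ne m).symm⟩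

lemma chordSwap_x : S.chordSwap m S.x = m := by
  obtain ⟨h1, h2, -, -, -⟩ := ne_of_mem_chordLegs hm
  simp [chordSwap, Equiv.swap_apply_of_ne_of_ne S.x_ne_y h2]

lemma chordSwap_m : S.chordSwap m m = S.x := by
  obtain ⟨-, -, h3, -, h5⟩ := ne_of_mem_chordLegs hm
  simp [chordSwap, Equiv.swap_apply_of_ne_of_ne h3.symm h5]

lemma chordSwap_y : S.chordSwap m S.y = S.D.sig m := by
  obtain ⟨-, h2, -, -, h5⟩ := ne_of_mem_chordLegs hm
  simp [chordSwap, Equiv.swap_apply_of_ne_of_ne h2.symm h5.symm]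

lemma chordSwap_sig_m : S.chordSwap m (S.D.sig m) = S.y := by
  obtain ⟨-, -, h3, -, -⟩ := ne_of_mem_chordLegs hm
  simp [chordSwap, Equiv.swap_apply_of_ne_of_ne S.x_ne_y.symm h3]

omit hm in
lemma chordSwap_of_ne {h : S.D.H} (h1 : h ≠ S.x) (h2 : h ≠ m) (h3 : h ≠ S.y)
    (h4 : h ≠ S.D.sig m) : S.chordSwap m h = h := by
  simp [chordSwap, Equiv.swap_apply_of_ne_of_ne h3 h4, Equiv.swap_apply_of_ne_of_ne h1 h2]

lemma chordSwap_mem_chordSet_iff {h : S.D.H} :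
    S.chordSwap m h ∈ S.chordSet ↔ h ∈ S.chordSet := by
  have hmE := mem_chordSet_of_mem_chordLegs hm
  have hsmE : S.D.sig m ∈ S.chordSet :=
    .inl (Diagram.sig_mem_compSet_iff.not.mpr (notMem_C_of_mem_chordLegs hm))
  have hxE : S.x ∈ S.chordSet := .inr (.inl rfl)
  have hyE : S.y ∈ S.chordSet := .inr (.inr rfl)
  by_cases h1 : h = S.x
  · simp only [h1, chordSwap_x hm, hmE, hxE]
  by_cases h2 : h = m
  · simp only [h2, chordSwap_m hm, hmE, hxE]
  by_cases h3 : h = S.y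
  · simp only [h3, chordSwap_y hm, hsmE, hyE]
  by_cases h4 : h = S.D.sig m
  · simp only [h4, chordSwap_sig_m hm, hsmE, hyE]
  rw [chordSwap_of_ne h1 h2 h3 h4]

lemma chordSwap_chordSig {h : S.D.H} (hh : h ∈ S.chordSet) :
    S.chordSwap m (S.chordSig h) = S.chordSig (S.chordSwap m h) := by
  obtain ⟨hxm, hxsm, hym, hysm, hmsm⟩ := ne_of_mem_chordLegs hm
  have hsig_m : S.chordSig m = S.D.sig m := chordSig_of_ne hxm.symm hym.symm
  have hsig_sm : S.chordSig (S.D.sig m) = m := by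
    rw [chordSig_of_ne hxsm.symm hysm.symm, S.D.sig_invol]
  have hsig_x : S.chordSig S.x = S.y := if_pos rfl
  have hsig_y : S.chordSig S.y = S.x := by simp [chordSig, S.x_ne_y.symm]
  by_cases h1 : h = S.x
  · rw [h1, hsig_x, chordSwap_x hm, chordSwap_y hm, hsig_m]
  by_cases h2 : h = m
  · rw [h2, hsig_m, chordSwap_m hm, chordSwap_sig_m hm, hsig_x]
  by_cases h3 : h = S.y
  · rw [h3, hsig_y, chordSwap_x hm, chordSwap_y hm, hsig_sm]
  by_cases h4 : h = S.D.sig m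
  · rw [h4, hsig_sm, chordSwap_m hm, chordSwap_sig_m hm, hsig_y]
  have hC := notMem_C_of_mem_chordSet hh h1 h3
  rw [chordSwap_of_ne h1 h2 h3 h4, chordSig_of_ne h1 h3]
  refine chordSwap_of_ne (sig_ne_x_of_notMem_C hC) (fun e => h4 ?_)
    (sig_ne_y_of_notMem_C hC) (fun e => h2 (S.D.sig_injective e))
  rw [← e, S.D.sig_invol]

lemma chordSwap_tau (h : S.D.H) : S.chordSwap m (S.D.tau h) = S.D.tau (S.chordSwap m h) := by
  simp only [chordSwap, Equiv.Perm.mul_apply]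
  rw [S.D.swap_tau S.tau_y hm.2.1, S.D.swap_tau S.tau_x hm.1]

lemma color_chordSwap (h : S.D.H) : S.D.color (S.chordSwap m h) = S.D.color h := by
  simp only [chordSwap, Equiv.Perm.mul_apply]
  rw [Equiv.apply_swap_eq_self (S.color_x.trans hm.2.2.1.symm),
    Equiv.apply_swap_eq_self (S.color_y.trans hm.2.2.2.symm)]

lemma bhlClass_graft_chordLeg :
    bhlClass (graftDiagram S.chordDiagram ⟨m, mem_chordSet_of_mem_chordLegs hm⟩ S.prunedTree) =
      bhlClass S.graftX := by
  let e : S.chordDiagram.H ≃ S.chordDiagram.H :=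
    (S.chordSwap m).subtypeEquiv fun _ => (chordSwap_mem_chordSet_iff hm).symm
  have he : e S.xE = ⟨m, mem_chordSet_of_mem_chordLegs hm⟩ := Subtype.ext (chordSwap_x hm)
  refine (bhlClass_eq_of_iso ?_).symm
  rw [← he]
  exact iso_graftDiagram e (fun h => Subtype.ext (chordSwap_chordSig hm h.2))
    (fun h => Subtype.ext (chordSwap_tau hm h.1)) (fun h _ => color_chordSwap hm h.1)

end chordSwap

/-! ### The link relation -/

variable {S}

/-- The component of a leg `u ∉ C` of color `i` that is not the end of an `i`-`j` chord has a leg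
of a third color `c`; after grafting, the leg of `C` colored `c` joins it. -/
lemma graft_hasBoring {u : S.chordDiagram.H} (hC : u.1 ∉ S.C) (hfix : S.D.tau u.1 = u.1)
    (hcol : S.D.color u.1 = S.i) (hm : u.1 ∉ S.chordLegs) :
    (graftDiagram S.chordDiagram u S.prunedTree).HasBoring := by
  obtain ⟨z, hz, hzi, hzj⟩ := Diagram.exists_mem_univIn_color_ne
    (fun h => S.not_hasBoring ⟨_, h⟩) hfix (j := S.j) fun h => hm ⟨hfix, h.1, hcol, h.2⟩
  rw [hcol] at hzi
  obtain ⟨c, ⟨hcU, hcc⟩, -⟩ := S.existsUnique_color (S.D.color z)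
  have hcw : c ≠ S.w := S.D.ne_of_tau_eq_self hcU.2 S.tau_w_ne
  have hcP : c ∈ S.prunedSet :=
    ⟨hcU.1, fun e => hzi (hcc ▸ e ▸ S.color_x), S.D.ne_of_tau_eq_self hcU.2 S.tau_sx_ne,
      fun e => hzj (hcc ▸ e ▸ S.color_y), S.D.ne_of_tau_eq_self hcU.2 S.tau_sy_ne⟩
  obtain ⟨hzC, hpath⟩ := exists_reach_chord hC hz.1
  refine ⟨.inl u, .inl ⟨.inl ⟨z, .inl hzC⟩, ⟨graftReach_inl_of_reach hpath, ?_⟩,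
    .inr (.inl ⟨c, hcP⟩), ⟨graftReach_inl_root.trans (graftReach_root_inr _), ?_⟩,
    Sum.inl_ne_inr, hcc.symm⟩⟩
  · exact congrArg Sum.inl (Subtype.ext hz.2)
  · have hroot : (⟨c, hcP⟩ : S.prunedTree.H) ≠ S.prunedTree.root :=
      fun e => hcw (congrArg Subtype.val e)
    simp only [graftTau]
    split_ifs with h
    · exact absurd h hroot
    exact congrArg (Sum.inr ∘ Sum.inl) (Subtype.ext
      (show (S.prunedTau ⟨c, hcP⟩).1 = c from (prunedTau_of_ne hcw).trans hcU.2))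

variable (S)

lemma card_filter_graftSites [DecidablePred fun u : S.chordDiagram.H =>
      (S.chordDiagram.tau u = u ∧ S.chordDiagram.color u = S.i) ∧ u.1 ∈ insert S.x S.chordLegs] :
    (Finset.univ.filter fun u : S.chordDiagram.H =>
        (S.chordDiagram.tau u = u ∧ S.chordDiagram.color u = S.i) ∧
          u.1 ∈ insert S.x S.chordLegs).card = 1 + S.D.m S.i S.j := by
  have hsub : insert S.x S.chordLegs ⊆ S.chordSet := by
    rintro _ (rfl | hm)
    exacts [.inr (.inl rfl), mem_chordSet_of_mem_chordLegs hm]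
  have hx : S.x ∉ S.chordLegs := fun hm => notMem_C_of_mem_chordLegs hm S.x_mem_C
  classical
  rw [Finset.filter_congr (q := fun u : S.chordDiagram.H => u.1 ∈ insert S.x S.chordLegs)]
  · refine (@Set.card_filter_val_mem _ _ _ S.chordDiagram.fin hsub _).trans ?_
    rw [Set.ncard_insert_of_notMem hx, add_comm]
    rfl
  rintro u -
  refine and_iff_right_of_imp ?_
  rintro (hx | hm)
  · exact ⟨Subtype.ext (show S.D.tau u.1 = u.1 by rw [hx, S.tau_x]),
      show S.D.color u.1 = S.i by rw [hx, S.color_x]⟩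
  · exact ⟨Subtype.ext hm.1, hm.2.2.1⟩

lemma sum_bhlClass_graft :
    ∑ u ∈ Finset.univ.filter (fun u => S.chordDiagram.tau u = u ∧ S.chordDiagram.color u = S.i),
      bhlClass (graftDiagram S.chordDiagram u S.prunedTree) =
      (1 + S.D.m S.i S.j) • bhlClass S.graftX := by
  classical
  rw [Finset.sum_congr rfl (g := fun u =>
      if u.1 ∈ insert S.x S.chordLegs then bhlClass S.graftX else 0), Finset.sum_ite,
    Finset.sum_const_zero, add_zero, Finset.sum_const, Finset.filter_filter,
    card_filter_graftSites]
  intro u hu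
  obtain ⟨hfix, hcol⟩ := (Finset.mem_filter.mp hu).2
  split_ifs with hsite
  · rcases hsite with hx | hm
    · rw [show u = S.xE from Subtype.ext hx]
    · exact bhlClass_graft_chordLeg hm
  · simp only [Set.mem_insert_iff, not_or] at hsite
    have hy : u.1 ≠ S.y := fun e => S.i_ne_j (hcol.symm.trans (congrArg S.D.color e ▸ S.color_y))
    exact bhlClass_eq_zero_of_hasBoring (graft_hasBoring
      (notMem_C_of_mem_chordSet u.2 hsite.1 hy) (congrArg Subtype.val hfix) hcol hsite.2)

theorem one_add_m_smul_bhlClass_eq_zero : (1 + (S.D.m S.i S.j : ℝ)) • bhlClass S.D = 0 := by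
  have hlink := sum_bhlClass_graftDiagram_eq_zero S.chordDiagram S.i S.prunedTree
  rw [sum_bhlClass_graft, ← Nat.cast_smul_eq_nsmul ℝ, Nat.cast_add, Nat.cast_one] at hlink
  rcases S.bhlClass_graftX with h | h <;> rw [h] at hlink
  · exact hlink
  · rwa [smul_neg, neg_eq_zero] at hlink

end Cherry

theorem finite_type_link_homotopy_stmt1_general (k : ℕ) (D : Diagram k) (h0 : D.H)
    (htree : D.IsTreeAt h0)
    (hcol : ∀ c : Fin k, ∃! x : D.H, x ∈ D.univIn h0 ∧ D.color x = c)
    (i j : Fin k) (hij : i ≠ j)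
    (x y : D.H) (hx : x ∈ D.univIn h0) (hy : y ∈ D.univIn h0)
    (hxc : D.color x = i) (hyc : D.color y = j)
    (htriv : D.tau (D.sig x) ≠ D.sig x)
    (hadj : D.sig y = D.tau (D.sig x) ∨ D.sig y = D.tau (D.tau (D.sig x))) :
    (1 + (D.m i j : ℝ)) • bhlClass D = 0 := by
  by_cases hb : D.HasBoring
  · rw [bhlClass_eq_zero_of_hasBoring hb, smul_zero]
  exact Cherry.one_add_m_smul_bhlClass_eq_zero
    ⟨D, h0, htree, hcol, i, j, hij, x, y, hx, hy, hxc, hyc, htriv, hadj, hb⟩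

/-- Let `k ≥ 3` and let `D` be a unitrivalent diagram on `k` colors
having a component `C` (the component of `h0`) of degree `k - 1`, i.e. a tree with
exactly one univalent vertex of each of the `k` colors.  Suppose the univalent vertices
`x, y` of `C` colored `i` resp. `j` are both adjacent to a common trivalent vertex of
`C` (the `tau`-orbit of `D.sig x`).  Then `(1 + m(D;i,j)) • [D] = 0` in `B^{hl}(k)`. -/
theorem finite_type_link_homotopy_stmt1 (k : ℕ) (hk : 3 ≤ k) (D : Diagram k) (h0 : D.H)
    (htree : D.IsTreeAt h0)
    (hcol : ∀ c : Fin k, ∃! x : D.H, x ∈ D.univIn h0 ∧ D.color x = c)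
    (i j : Fin k) (hij : i ≠ j)
    (x y : D.H) (hx : x ∈ D.univIn h0) (hy : y ∈ D.univIn h0)
    (hxc : D.color x = i) (hyc : D.color y = j)
    (htriv : D.tau (D.sig x) ≠ D.sig x)
    (hadj : D.sig y = D.tau (D.sig x) ∨ D.sig y = D.tau (D.tau (D.sig x))) :
    (1 + (D.m i j : ℝ)) • bhlClass D = 0 :=
  finite_type_link_homotopy_stmt1_general k D h0 htree hcol i j hij x y hx hy hxc hyc htriv hadj
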